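/- Let s be the k-th avalanche of KSPM(D) with a column l such that all of l,…,l+D−2 are fired in s. Then for every column j with l+D−1 ≤ j < max s, the columns j−(D−1), j, and j+1 are all fired in s, and consequently π(k)_j = π(k−1)_j. -/

import Mathlib

/-- Effect of firing column `i` in KSPM(D), on height-difference configurations. -/
def step (D : ℕ) (σ : ℕ → ℕ) (i : ℕ) : ℕ → ℕ :=
  fun j =>
    if j = i then σ i - D
    else if j + 1 = i then σ j + (D - 1)
    else if j = i + D - 1 then σ j + 1
    else σ j

/-- Transition on column `i`: `σ →ᵢ σ'`. -/
def KTrans (D : ℕ) (σ : ℕ → ℕ) (i : ℕ) (σ' : ℕ → ℕ) : Prop :=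
  D ≤ σ i ∧ σ' = step D σ i

/-- A strategy (list of fired columns) is legal from `σ`. -/
def Legal (D : ℕ) : (ℕ → ℕ) → List ℕ → Prop
  | _, [] => True
  | σ, i :: s => D ≤ σ i ∧ Legal D (step D σ i) s

/-- Configuration obtained by applying a strategy. -/
def applyStrat (D : ℕ) : (ℕ → ℕ) → List ℕ → (ℕ → ℕ)
  | σ, [] => σ
  | σ, i :: s => applyStrat D (step D σ i) s

/-- Reachability `σ →* σ'`. -/
def Reaches (D : ℕ) (σ σ' : ℕ → ℕ) : Prop :=
  ∃ s : List ℕ, Legal D σ s ∧ applyStrat D σ s = σ'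

/-- A configuration is stable (a fixed point) if no transition is possible. -/
def Stable (D : ℕ) (σ : ℕ → ℕ) : Prop := ∀ i, σ i < D

/-- Initial configuration: `N` grains stacked on column 0 (height differences `(N,0,0,…)`). -/
def initConf (N : ℕ) : ℕ → ℕ := fun j => if j = 0 then N else 0

/-- `τ = π(N)`: the stable configuration reachable from `N` stacked grains. -/
def IsPi (D N : ℕ) (τ : ℕ → ℕ) : Prop := Reaches D (initConf N) τ ∧ Stable D τ

/-- `σ^{↓0}`: add one grain on column 0. -/
def addGrain (σ : ℕ → ℕ) : ℕ → ℕ := Function.update σ 0 (σ 0 + 1)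

/-- `s` is the leftmost (lexicographically minimal) strategy from `τ^{↓0}` to `τ'`. -/
def IsAvalancheFor (D : ℕ) (τ τ' : ℕ → ℕ) (s : List ℕ) : Prop :=
  Legal D (addGrain τ) s ∧ applyStrat D (addGrain τ) s = τ' ∧
    ∀ s' : List ℕ, Legal D (addGrain τ) s' → applyStrat D (addGrain τ) s' = τ' →
      ¬ List.Lex (· < ·) s' s

/-- `s` is the `k`-th avalanche: leftmost strategy from `π(k-1)^{↓0}` to `π(k)`. -/
def IsAvalanche (D k : ℕ) (s : List ℕ) : Prop :=
  ∃ τ τ' : ℕ → ℕ, IsPi D (k - 1) τ ∧ IsPi D k τ' ∧ IsAvalancheFor D τ τ' s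

/-- Position `t` (0-indexed) of strategy `s` is a peak: it exceeds all earlier fired columns. -/
def IsPeak (s : List ℕ) (t : ℕ) : Prop :=
  t < s.length ∧ ∀ t' < t, s.getD t' 0 < s.getD t 0

/-- Column `p` is a peak of `s`. -/
def IsPeakVal (s : List ℕ) (p : ℕ) : Prop :=
  ∃ t : ℕ, IsPeak s t ∧ s.getD t 0 = p


/-!
Firing is conservative in the following weighted sense: after a legal strategy `p`,
`σ' j + D·#p(j) = σ j + (D-1)·#p(j+1) + #p(j-(D-1))`, where `#p(i)` counts the firings of `i`.
Starting from a stable configuration plus one grain, this forbids firing a column twice, so an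
avalanche is a set of columns and `τ' j - τ j` is read off from which of `j-(D-1), j, j+1` fire.

Suppose a column `x` with `l ≤ x ≤ max s` is not fired, and take the least one, so its `D-1`
predecessors are fired. Stability of `τ'` then forces `x+1, …, x+D-1` to stay unfired as well.
A column beyond such a gap of `D` unfired columns can only receive grains from inside the gap,
so it never becomes unstable, and nothing to the right of `x` fires: this contradicts `x ≤ max s`.
-/

section

variable {D : ℕ}

theorem legal_append {σ : ℕ → ℕ} {p q : List ℕ} :
    Legal D σ (p ++ q) ↔ Legal D σ p ∧ Legal D (applyStrat D σ p) q := by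
  induction p generalizing σ with
  | nil => simp [Legal, applyStrat]
  | cons i p ih => simp only [List.cons_append, Legal, applyStrat, ih, and_assoc]

theorem step_add_mul_ite (hD : 2 ≤ D) {σ : ℕ → ℕ} {i : ℕ} (hi : D ≤ σ i) (j : ℕ) :
    step D σ i j + D * (if i = j then 1 else 0) =
      σ j + (D - 1) * (if i = j + 1 then 1 else 0) +
        if D - 1 ≤ j then (if i = j - (D - 1) then 1 else 0) else 0 := by
  unfold step
  split_ifs <;> subst_vars <;> omega

theorem applyStrat_add_mul_count (hD : 2 ≤ D) {σ : ℕ → ℕ} {p : List ℕ} (hp : Legal D σ p)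
    (j : ℕ) :
    applyStrat D σ p j + D * p.count j =
      σ j + (D - 1) * p.count (j + 1) + if D - 1 ≤ j then p.count (j - (D - 1)) else 0 := by
  induction p generalizing σ with
  | nil => simp [applyStrat]
  | cons i p ih =>
    have h := ih hp.2
    have hstep := step_add_mul_ite hD hp.1 j
    simp only [applyStrat, List.count_cons, beq_iff_eq, Nat.mul_add] at h ⊢
    by_cases hj : D - 1 ≤ j
    · simp only [if_pos hj] at h hstep ⊢
      omega
    · simp only [if_neg hj] at h hstep ⊢
      omega

theorem addGrain_of_ne_zero (τ : ℕ → ℕ) {j : ℕ} (hj : j ≠ 0) : addGrain τ j = τ j :=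
  Function.update_of_ne hj _ _

theorem applyStrat_addGrain_lt_of_mem (hD : 2 ≤ D) {τ : ℕ → ℕ} (hτ : Stable D τ) {p : List ℕ}
    (hp : Legal D (addGrain τ) p) (hnd : p.Nodup) {c : ℕ} (hc : c ∈ p) :
    applyStrat D (addGrain τ) p c < D := by
  have h := applyStrat_add_mul_count hD hp c
  have := hτ c
  simp only [hnd.count, if_pos hc] at h
  by_cases hc0 : c = 0
  · subst hc0
    have : addGrain τ 0 = τ 0 + 1 := Function.update_self _ _ _
    split_ifs at h <;> omega
  · rw [addGrain_of_ne_zero τ hc0] at h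
    split_ifs at h <;> omega

theorem Legal.nodup (hD : 2 ≤ D) {τ : ℕ → ℕ} (hτ : Stable D τ) {s : List ℕ}
    (hs : Legal D (addGrain τ) s) : s.Nodup := by
  induction s using List.reverseRecOn with
  | nil => exact List.nodup_nil
  | append_singleton s c ih =>
    obtain ⟨hs, hc, -⟩ := legal_append.mp hs
    have hnd := ih hs
    have hcs : c ∉ s := fun hc' => (applyStrat_addGrain_lt_of_mem hD hτ hs hnd hc').not_ge hc
    refine List.nodup_append.mpr ⟨hnd, List.nodup_singleton c, fun a ha b hb hab => hcs ?_⟩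
    rwa [hab, List.mem_singleton.mp hb] at ha

theorem Legal.exists_prefix_fire_ge {σ : ℕ → ℕ} {p : List ℕ} (hp : Legal D σ p) {g : ℕ}
    (hg : ∃ m ∈ p, g ≤ m) :
    ∃ q c, Legal D σ q ∧ (∀ i ∈ q, i < g) ∧ c ∈ p ∧ g ≤ c ∧ D ≤ applyStrat D σ q c := by
  induction p generalizing σ with
  | nil => simp at hg
  | cons i p ih =>
    by_cases hi : g ≤ i
    · exact ⟨[], i, trivial, by simp, List.mem_cons_self, hi, hp.1⟩
    · have hg' : ∃ m ∈ p, g ≤ m := by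
        obtain ⟨m, hm, hgm⟩ := hg
        exact ⟨m, (List.mem_cons.mp hm).resolve_left (by omega), hgm⟩
      obtain ⟨q, c, hq, hqg, hc, hgc, hfire⟩ := ih hp.2 hg'
      refine ⟨i :: q, c, ⟨hp.1, hq⟩, ?_, List.mem_cons_of_mem _ hc, hgc, hfire⟩
      simpa [not_le.mp hi] using hqg

theorem Legal.forall_lt_of_gap (hD : 2 ≤ D) {τ : ℕ → ℕ} (hτ : Stable D τ) {s : List ℕ}
    (hs : Legal D (addGrain τ) s) {g : ℕ} (hgap : ∀ t < D, g + t ∉ s) : ∀ c ∈ s, c < g := by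
  by_contra! h
  obtain ⟨q, c, hq, hqg, hc, hgc, hfire⟩ := hs.exists_prefix_fire_ge h
  have hcg : g + D ≤ c := by
    by_contra
    exact hgap (c - g) (by omega) (by rwa [Nat.add_sub_cancel' hgc])
  have hnot : ∀ i, g ≤ i → q.count i = 0 := fun i hi =>
    List.count_eq_zero_of_not_mem fun hiq => by have := hqg i hiq; omega
  have h := applyStrat_add_mul_count hD hq c
  rw [hnot (c + 1) (by omega), hnot (c - (D - 1)) (by omega),
    addGrain_of_ne_zero τ (by omega)] at h
  have := hτ c
  split_ifs at h <;> omega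

namespace IsAvalancheFor

variable {τ τ' : ℕ → ℕ} {s : List ℕ}

theorem balance (hD : 2 ≤ D) (hτ : Stable D τ) (hav : IsAvalancheFor D τ τ' s) {j : ℕ}
    (hj : D - 1 ≤ j) :
    τ' j + D * (if j ∈ s then 1 else 0) =
      τ j + (D - 1) * (if j + 1 ∈ s then 1 else 0) + if j - (D - 1) ∈ s then 1 else 0 := by
  have h := applyStrat_add_mul_count hD hav.1 j
  rw [hav.2.1, if_pos hj, addGrain_of_ne_zero τ (by omega)] at h
  simpa only [(hav.1.nodup hD hτ).count] using h

theorem gap_spreads (hD : 2 ≤ D) (hτ : Stable D τ) (hτ' : Stable D τ')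
    (hav : IsAvalancheFor D τ τ' s) {g : ℕ} (hgD : D - 1 ≤ g) (hg : g ∉ s)
    (hbefore : ∀ y, g - (D - 1) ≤ y → y < g → y ∈ s) : ∀ t < D, g + t ∉ s := by
  intro t
  induction t with
  | zero => exact fun _ => hg
  | succ t ih =>
    intro ht hmem
    have h := hav.balance hD hτ (j := g + t) (by omega)
    have := hτ' (g + t)
    rw [if_neg (ih (by omega)), if_pos (by rwa [← Nat.add_assoc] at hmem),
      if_pos (hbefore _ (by omega) (by omega))] at h
    omega

theorem mem_of_le_max (hD : 2 ≤ D) (hτ : Stable D τ) (hτ' : Stable D τ')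
    (hav : IsAvalancheFor D τ τ' s) {l : ℕ} (hl : ∀ i : ℕ, l ≤ i → i < l + D - 1 → i ∈ s) :
    ∀ x, l ≤ x → x ≤ s.foldr max 0 → x ∈ s := by
  intro x
  induction x using Nat.strong_induction_on with
  | _ x ih =>
    intro hlx hxM
    by_cases hxl : x < l + D - 1
    · exact hl x hlx hxl
    by_contra hx
    have hbefore : ∀ y, x - (D - 1) ≤ y → y < x → y ∈ s :=
      fun y hy hyx => ih y hyx (by omega) (by omega)
    have hlt := hav.1.forall_lt_of_gap hD hτ (hav.gap_spreads hD hτ hτ' (by omega) hx hbefore)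
    have hM : s.foldr max 0 ≤ x - 1 :=
      List.max_le_of_forall_le s (x - 1) fun c hc => Nat.le_sub_one_of_lt (hlt c hc)
    have := hlt l (hl l le_rfl (by omega))
    omega

end IsAvalancheFor

end

theorem middle_columns_unchanged_general (D k l : ℕ) (hD : 2 ≤ D)
    (s : List ℕ) (τ τ' : ℕ → ℕ) (hτ : IsPi D (k - 1) τ) (hτ' : IsPi D k τ')
    (hav : IsAvalancheFor D τ τ' s)
    (hl : ∀ i : ℕ, l ≤ i → i < l + D - 1 → i ∈ s) :
    ∀ j : ℕ, l + D - 1 ≤ j → j < s.foldr max 0 →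
      ((j - (D - 1)) ∈ s ∧ j ∈ s ∧ (j + 1) ∈ s) ∧ τ' j = τ j := by
  intro j hlj hjM
  have hmem := hav.mem_of_le_max hD hτ.2 hτ'.2 hl
  have hback : j - (D - 1) ∈ s := hmem _ (by omega) (by omega)
  have hj : j ∈ s := hmem _ (by omega) (by omega)
  have hnext : j + 1 ∈ s := hmem _ (by omega) (by omega)
  refine ⟨⟨hback, hj, hnext⟩, ?_⟩
  have h := hav.balance hD hτ.2 (j := j) (by omega)
  rw [if_pos hj, if_pos hnext, if_pos hback] at h
  omega

/-- If a block l,…,l+D-2 is fired, then for every j with l+D-1 ≤ j < max s, the columns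
j-(D-1), j and j+1 are all fired, and consequently π(k)_j = π(k-1)_j. -/
theorem middle_columns_unchanged (D k l : ℕ) (hD : 2 ≤ D) (hk : 1 ≤ k)
    (s : List ℕ) (τ τ' : ℕ → ℕ) (hτ : IsPi D (k - 1) τ) (hτ' : IsPi D k τ')
    (hav : IsAvalancheFor D τ τ' s)
    (hl : ∀ i : ℕ, l ≤ i → i < l + D - 1 → i ∈ s) :
    ∀ j : ℕ, l + D - 1 ≤ j → j < s.foldr max 0 →
      ((j - (D - 1)) ∈ s ∧ j ∈ s ∧ (j + 1) ∈ s) ∧ τ' j = τ j :=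
  middle_columns_unchanged_general D k l hD s τ τ' hτ hτ' hav hl
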